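/- Let κ be a regular uncountable cardinal and T ⊆ ^{<κ}κ a uniformly homogeneous streamlined κ-tree. Let I be a set with at least two elements and let ⟨b_i : i ∈ I⟩ be a family of functions from κ to κ such that b_i↾γ ∈ T for every i ∈ I and γ < κ, and b_i(ε) ≠ b_j(ε) for all distinct i, j ∈ I and every ε < κ. Fix i₀ ∈ I and set T' := T ∪ {x * b_i : x ∈ T, i ∈ I∖{i₀}}. Then: (1) T' is a streamlined tree of height κ+1 that is uniformly homogeneous, and T' ∩ ^{<κ}κ = T; (2) B := {b_{i₀}↾γ : γ < κ} is a vanishing κ-branch of T'; (3) the set of limit ordinals α ≤ κ such that every node of T' of height < α belongs to some vanishing α-branch of T' equals V(T) ∪ {κ}. -/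

import Mathlib

noncomputable section

open Ordinal Set

/-- A node of a streamlined tree over `κ` is a function `s : α → κ` for an ordinal `α`;
we code it by its graph, a set of pairs `(ε, v)`. -/
abbrev PNode : Type 1 := Set (Ordinal × Ordinal)

/-- The set of ordinals in the domain of a coded node. -/
def ndom (s : PNode) : Set Ordinal := {ε | ∃ v, (ε, v) ∈ s}

/-- `s` codes a function from (the ordinals below) `α` to (the ordinals below) `ν`. -/
def IsNodeOf (ν α : Ordinal) (s : PNode) : Prop :=
  (∀ p ∈ s, p.1 < α ∧ p.2 < ν) ∧ ∀ ε, ε < α → ∃! v : Ordinal, (ε, v) ∈ s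

/-- The restriction `s ↾ α` of a node. -/
def nrestrict (s : PNode) (α : Ordinal) : PNode := {p ∈ s | p.1 < α}

/-- The node `s * t`, with domain `dom t`, agreeing with `s` on `dom s` and with `t` elsewhere. -/
def nstar (s t : PNode) : PNode :=
  {p ∈ s | p.1 ∈ ndom t} ∪ {p ∈ t | p.1 ∉ ndom s}

/-- The `α`-th level of a tree. -/
def level (T : Set PNode) (α : Ordinal) : Set PNode := {t ∈ T | ndom t = Set.Iio α}

/-- A streamlined tree: closed under restrictions. -/
def IsStreamlined (T : Set PNode) : Prop := ∀ t ∈ T, ∀ α : Ordinal, nrestrict t α ∈ T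

/-- Uniform homogeneity. -/
def UnifHomog (T : Set PNode) : Prop := ∀ s ∈ T, ∀ t ∈ T, nstar s t ∈ T

/-- Normality for a tree of height `h`. -/
def IsNormalOfHeight (T : Set PNode) (h : Ordinal) : Prop :=
  ∀ x ∈ T, ∀ α, α < h → ∃ y ∈ level T α, x ⊆ y ∨ y ⊆ x

/-- Two nodes are mutually exclusive iff they disagree everywhere on their common domain. -/
def MutExc (s t : PNode) : Prop :=
  ∀ ε v w : Ordinal, (ε, v) ∈ s → (ε, w) ∈ t → v ≠ w

/-- `s =* t` : same domain and agreement on a final segment of the domain. -/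
def EqStar (s t : PNode) : Prop :=
  ndom s = ndom t ∧ ∃ α ∈ ndom s, ∀ β, α ≤ β → ∀ v : Ordinal, ((β, v) ∈ s ↔ (β, v) ∈ t)

/-- `Δ(s,t)`: the least element of `{dom s, dom t} ∪ {δ ∈ dom s ∩ dom t ∣ s(δ) ≠ t(δ)}`. -/
def nDelta (s t : PNode) : Ordinal :=
  sInf ({δ | δ ∉ ndom s} ∪ {δ | δ ∉ ndom t} ∪
    {δ | ∃ v w : Ordinal, (δ, v) ∈ s ∧ (δ, w) ∈ t ∧ v ≠ w})

/-- `supp(f,g)` for two `θ`-sequences of nodes. -/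
def supp (θo : Ordinal) (f g : Ordinal → PNode) : Set Ordinal :=
  {τ | τ < θo ∧ (f τ ⊆ g τ ∨ g τ ⊆ f τ)}

/-- An `α`-branch of `T`. -/
def IsBranch (T : Set PNode) (α : Ordinal) (B : Set PNode) : Prop :=
  B ⊆ T ∧ (∀ x ∈ B, ∀ y ∈ B, x ⊆ y ∨ y ⊆ x) ∧
    {β : Ordinal | ∃ x ∈ B, ndom x = Set.Iio β} = Set.Iio α

/-- The set `V(T)` of vanishing levels of `T`. -/
def VSet (T : Set PNode) : Set Ordinal :=
  {α | Order.IsSuccLimit α ∧ ∀ x ∈ T, (∃ β, β < α ∧ ndom x = Set.Iio β) →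
    ∃ B, IsBranch T α B ∧ x ∈ B ∧ ⋃₀ B ∉ T}

/-- A closed set of ordinals. -/
def OrdClosed (A : Set Ordinal) : Prop :=
  ∀ α : Ordinal, Order.IsSuccLimit α → (∀ β, β < α → (A ∩ Set.Ioo β α).Nonempty) → α ∈ A

/-- A mutually exclusive `F`-ascent path (`F` given via the membership predicate `InF`)
through a tree `T` of height `γ`. -/
def MEAscentPath (θo : Ordinal) (InF : Set Ordinal → Prop) (T : Set PNode) (γ : Ordinal)
    (f : Ordinal → Ordinal → PNode) : Prop :=
  (∀ α, α < γ → ∀ τ, τ < θo → f α τ ∈ level T α) ∧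
  (∀ α β, α < β → β < γ → InF (supp θo (f α) (f β))) ∧
  (∀ α, 0 < α → α < γ → ∀ τ τ', τ < θo → τ' < θo → τ ≠ τ' → MutExc (f α τ) (f α τ'))

/-- A condition: a pair `⟨T, f⟩` together with the ordinal `η` such that `T` has height `η + 1`. -/
structure SCond : Type 1 where
  T : Set PNode
  f : Ordinal.{0} → Ordinal.{0} → PNode
  η : Ordinal.{0}

/-- Membership in the filter generated by the decreasing sequence `X` of length `ζ`. -/
def InFX (ζ : Ordinal) (X : Ordinal → Set Ordinal) (Y : Set Ordinal) : Prop :=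
  ∃ ξ, ξ < ζ ∧ X ξ ⊆ Y

/-- `p` is a condition of the forcing `𝕊^κ_𝐗`. -/
def IsSCondX (κ : Cardinal) (θo : Ordinal) (InF : Set Ordinal → Prop) (p : SCond) : Prop :=
  (∀ t ∈ p.T, ∃ α, α ≤ p.η ∧ IsNodeOf κ.ord α t) ∧
  IsStreamlined p.T ∧
  UnifHomog p.T ∧
  IsNormalOfHeight p.T (p.η + 1) ∧
  (∀ α, α ≤ p.η → (level p.T α).Nonempty) ∧
  (∀ α, α ≤ p.η → Cardinal.mk ↥(level p.T α) < Cardinal.lift.{1} κ) ∧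
  MEAscentPath θo InF p.T (p.η + 1) p.f ∧
  OrdClosed (VSet p.T) ∧
  (Order.IsSuccLimit p.η → p.η ∈ VSet p.T) ∧
  (∀ α, 0 < α → α ≤ p.η → ∀ t ∈ level p.T α, InF {τ | τ < θo ∧ MutExc t (p.f α τ)})

/-- `p ≤ q` in `𝕊^κ_𝐗` (and in `𝕊^κ_θ`): `p` end-extends `q` in both coordinates. -/
def sext (θo : Ordinal) (p q : SCond) : Prop :=
  q.η ≤ p.η ∧
  (∀ t : PNode, t ∈ q.T ↔ (t ∈ p.T ∧ ∃ α, α ≤ q.η ∧ ndom t = Set.Iio α)) ∧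
  (∀ α, α ≤ q.η → ∀ τ, τ < θo → p.f α τ = q.f α τ)

/-- Even ordinals (limit ordinals are even). -/
def EvenOrd (β : Ordinal) : Prop := ∃ γ : Ordinal, β = 2 * γ

/-- Player II has a winning strategy in the game `⅁_μ(P)`: she can choose conditions at all
even (incl. limit) stages `< μ`, only as a function of the previous moves, so that as long as
player I plays legally at odd stages, the resulting `μ`-sequence is decreasing. -/
def WinningStratII {P : Type*} (le : P → P → Prop) (μ : Ordinal) : Prop :=
  ∃ σ : (β : Ordinal) → ({γ : Ordinal // γ < β} → P) → P,
    ∀ g : Ordinal → P,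
      (∀ β, β < μ →
        (EvenOrd β → g β = σ β (fun γ => g γ.1)) ∧
        (¬ EvenOrd β → ∀ γ, γ < β → le (g β) (g γ))) →
      ∀ γ β, γ < β → β < μ → le (g β) (g γ)

/-!
Every node of `T'` of height `κ` is of the form `x * b_i` with `x ∈ T` and `i ≠ i₀`; since the
`b_i` are pairwise mutually exclusive, such a node differs from every `x' * b_{i₀}` at any
level above both `x` and `x'`. Hence no `x * b_{i₀}` lies in `T'`, and its restrictions form a
vanishing `κ`-branch through `x`. Below `κ` nothing changes: `T'` has the same nodes of height
`< κ` as `T`, and the union of an `α`-branch with `α < κ` has height at most `α`, so it cannot be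
one of the new nodes.
-/

open Order

lemma mem_ndom_of_mem {s : PNode} {p : Ordinal × Ordinal} (hp : p ∈ s) : p.1 ∈ ndom s :=
  ⟨p.2, hp⟩

lemma mem_nstar {s t : PNode} {p : Ordinal × Ordinal} :
    p ∈ nstar s t ↔ (p ∈ s ∧ p.1 ∈ ndom t) ∨ (p ∈ t ∧ p.1 ∉ ndom s) := Iff.rfl

lemma mem_nrestrict {s : PNode} {γ : Ordinal} {p : Ordinal × Ordinal} :
    p ∈ nrestrict s γ ↔ p ∈ s ∧ p.1 < γ := Iff.rfl

lemma IsNodeOf.ndom_eq {ν α : Ordinal} {s : PNode} (h : IsNodeOf ν α s) : ndom s = Iio α := by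
  ext ε
  exact ⟨fun ⟨_, hv⟩ => (h.1 _ hv).1, fun hε => (h.2 ε hε).exists⟩

lemma ndom_nstar (s t : PNode) : ndom (nstar s t) = ndom t := by
  ext ε
  constructor
  · rintro ⟨v, ⟨-, hε⟩ | ⟨hv, -⟩⟩
    exacts [hε, ⟨v, hv⟩]
  · rintro ⟨v, hv⟩
    by_cases hεs : ε ∈ ndom s
    · obtain ⟨w, hw⟩ := hεs
      exact ⟨w, Or.inl ⟨hw, v, hv⟩⟩
    · exact ⟨v, Or.inr ⟨hv, hεs⟩⟩

lemma ndom_nrestrict (s : PNode) (γ : Ordinal) : ndom (nrestrict s γ) = ndom s ∩ Iio γ := by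
  ext ε
  exact ⟨fun ⟨v, hv, hε⟩ => ⟨⟨v, hv⟩, hε⟩, fun ⟨⟨v, hv⟩, hε⟩ => ⟨v, hv, hε⟩⟩

lemma ndom_nrestrict_of_le {s : PNode} {α γ : Ordinal} (hs : ndom s = Iio α) (hγ : γ ≤ α) :
    ndom (nrestrict s γ) = Iio γ := by
  rw [ndom_nrestrict, hs, inter_eq_self_of_subset_right (Iio_subset_Iio hγ)]

lemma nrestrict_mono (s : PNode) : Monotone (nrestrict s) :=
  fun _ _ h _ hp => ⟨hp.1, hp.2.trans_le h⟩

lemma nrestrict_eq_self {s : PNode} {γ : Ordinal} (h : ndom s ⊆ Iio γ) : nrestrict s γ = s :=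
  ext fun _ => ⟨fun hp => hp.1, fun hp => ⟨hp, h (mem_ndom_of_mem hp)⟩⟩

lemma nrestrict_nstar (s t : PNode) (γ : Ordinal) :
    nrestrict (nstar s t) γ = nstar (nrestrict s γ) (nrestrict t γ) := by
  ext ⟨ε, v⟩
  simp only [mem_nrestrict, mem_nstar, ndom_nrestrict, mem_inter_iff, mem_Iio]
  tauto

lemma nrestrict_nstar_eq_left {x t : PNode} {β : Ordinal} (hx : ndom x = Iio β)
    (ht : Iio β ⊆ ndom t) : nrestrict (nstar x t) β = x := by
  ext p
  have hpx : p ∈ x → p.1 < β := fun h => by simpa only [hx, mem_Iio] using mem_ndom_of_mem h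
  have hpt : p.1 < β → p.1 ∈ ndom t := fun h => ht h
  simp only [mem_nrestrict, mem_nstar, hx, mem_Iio]
  tauto

lemma nstar_eq_nrestrict {s t : PNode} {β : Ordinal} (hts : ndom t ⊆ ndom s)
    (ht : ndom t = Iio β) : nstar s t = nrestrict s β := by
  ext p
  have hpt : p ∈ t → p.1 ∈ ndom s := fun h => hts (mem_ndom_of_mem h)
  simp only [mem_nstar, mem_nrestrict, ht, mem_Iio]
  tauto

lemma nstar_nrestrict_zero (s t : PNode) : nstar (nrestrict s 0) t = t := by
  ext p
  simp [mem_nstar, mem_nrestrict, ndom_nrestrict]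

lemma nstar_nstar {s x t : PNode} {γ : Ordinal} (hs : ndom s ⊆ Iio γ) (hx : ndom x ⊆ Iio γ) :
    nstar s (nstar x t) = nstar (nstar s (nrestrict (nstar x t) γ)) t := by
  ext ⟨ε, v⟩
  have hms : (ε, v) ∈ s → ε ∈ ndom s := mem_ndom_of_mem
  have hmx : (ε, v) ∈ x → ε ∈ ndom x := mem_ndom_of_mem
  have hmt : (ε, v) ∈ t → ε ∈ ndom t := mem_ndom_of_mem
  have hs' : ε ∈ ndom s → ε < γ := fun h => hs h
  have hx' : ε ∈ ndom x → ε < γ := fun h => hx h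
  simp only [mem_nstar, mem_nrestrict, ndom_nstar, ndom_nrestrict, mem_inter_iff, mem_Iio]
  tauto

lemma sUnion_nrestrict {u : PNode} {o : Ordinal} (ho : IsSuccLimit o) (hu : ndom u ⊆ Iio o) :
    ⋃₀ {y : PNode | ∃ γ, γ < o ∧ y = nrestrict u γ} = u := by
  ext p
  rw [mem_sUnion]
  constructor
  · rintro ⟨-, ⟨γ, -, rfl⟩, hp⟩
    exact hp.1
  · intro hp
    exact ⟨_, ⟨succ p.1, ho.succ_lt (hu (mem_ndom_of_mem hp)), rfl⟩, hp, lt_succ p.1⟩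

lemma isBranch_nrestrict {S : Set PNode} {u : PNode} {o : Ordinal} (hu : ndom u = Iio o)
    (hS : ∀ γ, γ < o → nrestrict u γ ∈ S) :
    IsBranch S o {y : PNode | ∃ γ, γ < o ∧ y = nrestrict u γ} := by
  refine ⟨?_, ?_, ?_⟩
  · rintro _ ⟨γ, hγ, rfl⟩
    exact hS γ hγ
  · rintro _ ⟨γ, -, rfl⟩ _ ⟨γ', -, rfl⟩
    exact (le_total γ γ').imp (fun h => nrestrict_mono u h) (fun h => nrestrict_mono u h)
  · ext β
    constructor
    · rintro ⟨_, ⟨γ, hγ, rfl⟩, hd⟩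
      rw [ndom_nrestrict_of_le hu hγ.le, Iio_inj] at hd
      exact hd ▸ hγ
    · intro hβ
      exact ⟨_, ⟨β, hβ, rfl⟩, ndom_nrestrict_of_le hu (le_of_lt hβ)⟩

lemma IsBranch.lt_of_mem {S B : Set PNode} {α β : Ordinal} (hB : IsBranch S α B) {y : PNode}
    (hy : y ∈ B) (hd : ndom y = Iio β) : β < α := by
  have hβ : β ∈ Iio α := hB.2.2 ▸ ⟨y, hy, hd⟩
  exact hβ

lemma IsBranch.ndom_sUnion_subset {S B : Set PNode} {α : Ordinal} (hB : IsBranch S α B)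
    (hS : ∀ y ∈ S, ∃ β, ndom y = Iio β) : ndom (⋃₀ B) ⊆ Iio α := by
  rintro ε ⟨v, y, hyB, hy⟩
  obtain ⟨β, hβ⟩ := hS y (hB.1 hyB)
  have hε : ε ∈ Iio β := hβ ▸ mem_ndom_of_mem hy
  exact lt_trans hε (hB.lt_of_mem hyB hβ)

def adjoinBranches {ι : Type*} (T : Set PNode) (b : ι → PNode) (i₀ : ι) : Set PNode :=
  T ∪ {y | ∃ x ∈ T, ∃ i, i ≠ i₀ ∧ y = nstar x (b i)}

section adjoinBranches

variable {ι : Type*} {T : Set PNode} {b : ι → PNode} {i₀ : ι} {o : Ordinal}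

lemma subset_adjoinBranches : T ⊆ adjoinBranches T b i₀ := subset_union_left

lemma nstar_mem_adjoinBranches {x : PNode} (hx : x ∈ T) {i : ι} (hi : i ≠ i₀) :
    nstar x (b i) ∈ adjoinBranches T b i₀ :=
  Or.inr ⟨x, hx, i, hi, rfl⟩

lemma mem_of_mem_adjoinBranches (hbdom : ∀ i, ndom (b i) = Iio o) {y : PNode}
    (hy : y ∈ adjoinBranches T b i₀) {β : Ordinal} (hβ : β < o) (hd : ndom y = Iio β) :
    y ∈ T := by
  rcases hy with hy | ⟨x, -, i, -, rfl⟩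
  · exact hy
  · rw [ndom_nstar, hbdom i, Iio_inj] at hd
    exact (hβ.ne hd.symm).elim

lemma exists_ndom_eq_of_mem_adjoinBranches (hTdom : ∀ t ∈ T, ∃ β < o, ndom t = Iio β)
    (hbdom : ∀ i, ndom (b i) = Iio o) {y : PNode} (hy : y ∈ adjoinBranches T b i₀) :
    ∃ β ≤ o, ndom y = Iio β := by
  rcases hy with hy | ⟨x, -, i, -, rfl⟩
  · obtain ⟨β, hβ, hd⟩ := hTdom y hy
    exact ⟨β, hβ.le, hd⟩
  · exact ⟨o, le_rfl, by rw [ndom_nstar, hbdom i]⟩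

lemma nrestrict_nstar_mem (hstream : IsStreamlined T) (hhom : UnifHomog T)
    (hbT : ∀ i, ∀ γ, γ < o → nrestrict (b i) γ ∈ T) {x : PNode} (hx : x ∈ T) (i : ι)
    {γ : Ordinal} (hγ : γ < o) : nrestrict (nstar x (b i)) γ ∈ T := by
  rw [nrestrict_nstar]
  exact hhom _ (hstream x hx γ) _ (hbT i γ hγ)

lemma isStreamlined_adjoinBranches (hstream : IsStreamlined T) (hhom : UnifHomog T)
    (hbT : ∀ i, ∀ γ, γ < o → nrestrict (b i) γ ∈ T) (hbdom : ∀ i, ndom (b i) = Iio o) :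
    IsStreamlined (adjoinBranches T b i₀) := by
  rintro y (hy | ⟨x, hx, i, hi, rfl⟩) γ
  · exact subset_adjoinBranches (hstream y hy γ)
  · rcases lt_or_ge γ o with hγ | hγ
    · exact subset_adjoinBranches (nrestrict_nstar_mem hstream hhom hbT hx i hγ)
    · rw [nrestrict_eq_self (by rw [ndom_nstar, hbdom i]; exact Iio_subset_Iio hγ)]
      exact nstar_mem_adjoinBranches hx hi

lemma unifHomog_adjoinBranches (hTdom : ∀ t ∈ T, ∃ β < o, ndom t = Iio β)
    (hstream : IsStreamlined T) (hhom : UnifHomog T)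
    (hbT : ∀ i, ∀ γ, γ < o → nrestrict (b i) γ ∈ T) (hbdom : ∀ i, ndom (b i) = Iio o) :
    UnifHomog (adjoinBranches T b i₀) := by
  intro s hs t ht
  rcases hs with hs | ⟨x', hx', i', hi', rfl⟩
  · obtain ⟨βs, hβs, hds⟩ := hTdom s hs
    rcases ht with ht | ⟨x, hx, i, hi, rfl⟩
    · exact subset_adjoinBranches (hhom s hs t ht)
    · obtain ⟨βx, hβx, hdx⟩ := hTdom x hx
      rw [nstar_nstar (hds ▸ Iio_subset_Iio (le_max_left βs βx))
        (hdx ▸ Iio_subset_Iio (le_max_right βs βx))]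
      exact nstar_mem_adjoinBranches
        (hhom _ hs _ (nrestrict_nstar_mem hstream hhom hbT hx i (max_lt hβs hβx))) hi
  · obtain ⟨β, hβ, hdt⟩ := exists_ndom_eq_of_mem_adjoinBranches hTdom hbdom ht
    rw [nstar_eq_nrestrict (by rw [hdt, ndom_nstar, hbdom i']; exact Iio_subset_Iio hβ) hdt]
    exact isStreamlined_adjoinBranches hstream hhom hbT hbdom _
      (nstar_mem_adjoinBranches hx' hi') β

lemma level_adjoinBranches_nonempty (hlevne : ∀ α, α < o → (level T α).Nonempty)
    (hbT : ∀ i, ∀ γ, γ < o → nrestrict (b i) γ ∈ T) (hbdom : ∀ i, ndom (b i) = Iio o)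
    (ho : 0 < o) {i : ι} (hi : i ≠ i₀) {α : Ordinal} (hα : α ≤ o) :
    (level (adjoinBranches T b i₀) α).Nonempty := by
  rcases hα.lt_or_eq with hα | rfl
  · obtain ⟨t, ht, hd⟩ := hlevne α hα
    exact ⟨t, subset_adjoinBranches ht, hd⟩
  · refine ⟨b i, ?_, hbdom i⟩
    simpa only [nstar_nrestrict_zero] using nstar_mem_adjoinBranches (hbT i 0 ho) hi

lemma level_adjoinBranches_eq_empty (hTdom : ∀ t ∈ T, ∃ β < o, ndom t = Iio β)
    (hbdom : ∀ i, ndom (b i) = Iio o) {α : Ordinal} (hα : o < α) :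
    level (adjoinBranches T b i₀) α = ∅ := by
  refine eq_empty_of_forall_notMem fun y ⟨hy, hd⟩ => ?_
  obtain ⟨β, hβ, hdy⟩ := exists_ndom_eq_of_mem_adjoinBranches hTdom hbdom hy
  exact (hβ.trans_lt hα).ne (Iio_inj.1 (hdy.symm.trans hd))

lemma adjoinBranches_sep_lt (hTdom : ∀ t ∈ T, ∃ β < o, ndom t = Iio β)
    (hbdom : ∀ i, ndom (b i) = Iio o) :
    {t ∈ adjoinBranches T b i₀ | ∃ α, α < o ∧ ndom t = Iio α} = T :=
  ext fun t => ⟨fun ⟨ht, _, hα, hd⟩ => mem_of_mem_adjoinBranches hbdom ht hα hd,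
    fun ht => ⟨subset_adjoinBranches ht, hTdom t ht⟩⟩

lemma nstar_ne_nstar (hbdom : ∀ i, ndom (b i) = Iio o)
    (hbdist : Pairwise fun i j => MutExc (b i) (b j)) {i j : ι} (hij : i ≠ j) {x x' : PNode}
    {β β' : Ordinal} (hβ : β < o) (hβ' : β' < o) (hx : ndom x = Iio β)
    (hx' : ndom x' = Iio β') : nstar x (b i) ≠ nstar x' (b j) := by
  intro heq
  obtain ⟨v, hv⟩ : max β β' ∈ ndom (b i) := by rw [hbdom i]; exact max_lt hβ hβ'
  have hεx : max β β' ∉ ndom x := by rw [hx]; exact (le_max_left β β').not_gt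
  have hεx' : max β β' ∉ ndom x' := by rw [hx']; exact (le_max_right β β').not_gt
  have hmem : (max β β', v) ∈ nstar x' (b j) := heq ▸ mem_nstar.2 (Or.inr ⟨hv, hεx⟩)
  rcases mem_nstar.1 hmem with ⟨hm, -⟩ | ⟨hm, -⟩
  · exact hεx' (mem_ndom_of_mem hm)
  · exact hbdist hij _ v v hv hm rfl

lemma nstar_notMem_adjoinBranches (hTdom : ∀ t ∈ T, ∃ β < o, ndom t = Iio β)
    (hbdom : ∀ i, ndom (b i) = Iio o) (hbdist : Pairwise fun i j => MutExc (b i) (b j))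
    {x : PNode} {β : Ordinal} (hβ : β < o) (hx : ndom x = Iio β) :
    nstar x (b i₀) ∉ adjoinBranches T b i₀ := by
  rintro (h | ⟨x', hx', i, hi, heq⟩)
  · obtain ⟨γ, hγ, hd⟩ := hTdom _ h
    rw [ndom_nstar, hbdom i₀, Iio_inj] at hd
    exact hγ.ne' hd
  · obtain ⟨β', hβ', hd'⟩ := hTdom x' hx'
    exact nstar_ne_nstar hbdom hbdist hi.symm hβ hβ' hx hd' heq

lemma notMem_adjoinBranches (hTdom : ∀ t ∈ T, ∃ β < o, ndom t = Iio β)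
    (hbdom : ∀ i, ndom (b i) = Iio o) (hbdist : Pairwise fun i j => MutExc (b i) (b j))
    (ho : 0 < o) : b i₀ ∉ adjoinBranches T b i₀ := by
  simpa only [nstar_nrestrict_zero] using nstar_notMem_adjoinBranches hTdom hbdom hbdist ho
    (ndom_nrestrict_of_le (hbdom i₀) zero_le)

lemma self_mem_VSet_adjoinBranches (ho : IsSuccLimit o)
    (hTdom : ∀ t ∈ T, ∃ β < o, ndom t = Iio β) (hstream : IsStreamlined T) (hhom : UnifHomog T)
    (hbT : ∀ i, ∀ γ, γ < o → nrestrict (b i) γ ∈ T) (hbdom : ∀ i, ndom (b i) = Iio o)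
    (hbdist : Pairwise fun i j => MutExc (b i) (b j)) :
    o ∈ VSet (adjoinBranches T b i₀) := by
  refine ⟨ho, fun x hx ⟨β, hβ, hdx⟩ => ?_⟩
  have hxT : x ∈ T := mem_of_mem_adjoinBranches hbdom hx hβ hdx
  have hu : ndom (nstar x (b i₀)) = Iio o := by rw [ndom_nstar, hbdom i₀]
  refine ⟨_, isBranch_nrestrict hu fun γ hγ =>
    subset_adjoinBranches (nrestrict_nstar_mem hstream hhom hbT hxT i₀ hγ), ⟨β, hβ, ?_⟩, ?_⟩
  · rw [nrestrict_nstar_eq_left hdx (hbdom i₀ ▸ Iio_subset_Iio hβ.le)]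
  · rw [sUnion_nrestrict ho hu.subset]
    exact nstar_notMem_adjoinBranches hTdom hbdom hbdist hβ hdx

lemma mem_VSet_adjoinBranches_iff (hTdom : ∀ t ∈ T, ∃ β < o, ndom t = Iio β)
    (hbdom : ∀ i, ndom (b i) = Iio o) {α : Ordinal} (hα : α < o) :
    α ∈ VSet (adjoinBranches T b i₀) ↔ α ∈ VSet T := by
  have hlow : ∀ y ∈ adjoinBranches T b i₀, ∀ β, β ≤ α → ndom y = Iio β → y ∈ T :=
    fun y hy β hβ hd => mem_of_mem_adjoinBranches hbdom hy (hβ.trans_lt hα) hd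
  refine and_congr_right fun _ => ⟨fun hV x hx hex => ?_, fun hV x hx hex => ?_⟩
  · obtain ⟨B, hB, hxB, hU⟩ := hV x (subset_adjoinBranches hx) hex
    have hBT : B ⊆ T := fun y hy => by
      obtain ⟨β, -, hd⟩ := exists_ndom_eq_of_mem_adjoinBranches hTdom hbdom (hB.1 hy)
      exact hlow y (hB.1 hy) β (hB.lt_of_mem hy hd).le hd
    exact ⟨B, ⟨hBT, hB.2⟩, hxB, fun h => hU (subset_adjoinBranches h)⟩
  · obtain ⟨β, hβ, hd⟩ := hex
    obtain ⟨B, hB, hxB, hU⟩ := hV x (hlow x hx β hβ.le hd) ⟨β, hβ, hd⟩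
    refine ⟨B, ⟨hB.1.trans subset_adjoinBranches, hB.2⟩, hxB, fun h => hU ?_⟩
    obtain ⟨γ, -, hγ⟩ := exists_ndom_eq_of_mem_adjoinBranches hTdom hbdom h
    have hγα : Iio γ ⊆ Iio α :=
      hγ ▸ hB.ndom_sUnion_subset fun y hy => (hTdom y hy).imp fun _ h => h.2
    exact hlow _ h γ (Iio_subset_Iio_iff.1 hγα) hγ

lemma VSet_adjoinBranches (ho : IsSuccLimit o)
    (hTdom : ∀ t ∈ T, ∃ β < o, ndom t = Iio β) (hstream : IsStreamlined T) (hhom : UnifHomog T)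
    (hbT : ∀ i, ∀ γ, γ < o → nrestrict (b i) γ ∈ T) (hbdom : ∀ i, ndom (b i) = Iio o)
    (hbdist : Pairwise fun i j => MutExc (b i) (b j)) :
    {α ∈ VSet (adjoinBranches T b i₀) | α ≤ o} = (VSet T ∩ Iic o) ∪ {o} := by
  ext α
  simp only [mem_sep_iff, mem_union, mem_inter_iff, mem_Iic, mem_singleton_iff]
  rcases lt_trichotomy α o with hα | rfl | hα
  · simp [mem_VSet_adjoinBranches_iff hTdom hbdom hα, hα.le, hα.ne]
  · simp [self_mem_VSet_adjoinBranches ho hTdom hstream hhom hbT hbdom hbdist]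
  · simp [hα.not_ge, hα.ne']

end adjoinBranches

theorem statement8_general
    (κ : Cardinal) (hκunc : Cardinal.aleph0 < κ)
    (T : Set PNode)
    (hnodes : ∀ t ∈ T, ∃ α, α < κ.ord ∧ IsNodeOf κ.ord α t)
    (hstream : IsStreamlined T)
    (hlevne : ∀ α, α < κ.ord → (level T α).Nonempty)
    (hhom : UnifHomog T)
    {ι : Type} (hι : ∃ i j : ι, i ≠ j)
    (b : ι → PNode)
    (hb : ∀ i, IsNodeOf κ.ord κ.ord (b i))
    (hbT : ∀ i, ∀ γ, γ < κ.ord → nrestrict (b i) γ ∈ T)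
    (hbdist : ∀ i j, i ≠ j → ∀ ε, ε < κ.ord → ∀ v w : Ordinal,
      (ε, v) ∈ b i → (ε, w) ∈ b j → v ≠ w)
    (i₀ : ι)
    (T' : Set PNode)
    (hT' : T' = T ∪ {y | ∃ x ∈ T, ∃ i, i ≠ i₀ ∧ y = nstar x (b i)}) :
    (IsStreamlined T' ∧ UnifHomog T' ∧
      (∀ α, α ≤ κ.ord → (level T' α).Nonempty) ∧
      (∀ α, κ.ord < α → level T' α = ∅) ∧
      {t ∈ T' | ∃ α, α < κ.ord ∧ ndom t = Set.Iio α} = T) ∧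
    (IsBranch T' κ.ord {y | ∃ γ, γ < κ.ord ∧ y = nrestrict (b i₀) γ} ∧
      ⋃₀ {y : PNode | ∃ γ, γ < κ.ord ∧ y = nrestrict (b i₀) γ} ∉ T') ∧
    ({α ∈ VSet T' | α ≤ κ.ord} = (VSet T ∩ Set.Iic κ.ord) ∪ {κ.ord}) := by
  change T' = adjoinBranches T b i₀ at hT'
  subst hT'
  have hκ : IsSuccLimit κ.ord := Cardinal.isSuccLimit_ord hκunc.le
  have hTdom : ∀ t ∈ T, ∃ β < κ.ord, ndom t = Iio β :=
    fun t ht => (hnodes t ht).imp fun _ h => ⟨h.1, h.2.ndom_eq⟩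
  have hbdom : ∀ i, ndom (b i) = Iio κ.ord := fun i => (hb i).ndom_eq
  have hbME : Pairwise fun i j => MutExc (b i) (b j) :=
    fun i j hij ε v w hv hw => hbdist i j hij ε ((hb i).1 _ hv).1 v w hv hw
  have : Nontrivial ι := ⟨hι⟩
  obtain ⟨i, hi⟩ := exists_ne i₀
  refine ⟨⟨isStreamlined_adjoinBranches hstream hhom hbT hbdom,
      unifHomog_adjoinBranches hTdom hstream hhom hbT hbdom,
      fun α => level_adjoinBranches_nonempty hlevne hbT hbdom hκ.bot_lt hi,
      fun α => level_adjoinBranches_eq_empty hTdom hbdom,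
      adjoinBranches_sep_lt hTdom hbdom⟩,
    ⟨isBranch_nrestrict (hbdom i₀) fun γ hγ => subset_adjoinBranches (hbT i₀ γ hγ), ?_⟩,
    VSet_adjoinBranches hκ hTdom hstream hhom hbT hbdom hbME⟩
  rw [sUnion_nrestrict hκ (hbdom i₀).subset]
  exact notMem_adjoinBranches hTdom hbdom hbME hκ.bot_lt

/-- adjoining all branches `b_i` (`i ≠ i₀`) of a mutually exclusive family of
cofinal branches to a uniformly homogeneous streamlined `κ`-tree yields a uniformly
homogeneous streamlined tree of height `κ + 1` in which `b_{i₀}` determines a vanishing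
`κ`-branch, and whose set of vanishing levels is `V(T) ∪ {κ}`. -/
theorem statement8
    (κ : Cardinal) (hκreg : κ.IsRegular) (hκunc : Cardinal.aleph0 < κ)
    (T : Set PNode)
    (hnodes : ∀ t ∈ T, ∃ α, α < κ.ord ∧ IsNodeOf κ.ord α t)
    (hstream : IsStreamlined T)
    (hlevne : ∀ α, α < κ.ord → (level T α).Nonempty)
    (hlevsm : ∀ α, α < κ.ord → Cardinal.mk ↥(level T α) < Cardinal.lift.{1} κ)
    (hhom : UnifHomog T)
    {ι : Type} (hι : ∃ i j : ι, i ≠ j)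
    (b : ι → PNode)
    (hb : ∀ i, IsNodeOf κ.ord κ.ord (b i))
    (hbT : ∀ i, ∀ γ, γ < κ.ord → nrestrict (b i) γ ∈ T)
    (hbdist : ∀ i j, i ≠ j → ∀ ε, ε < κ.ord → ∀ v w : Ordinal,
      (ε, v) ∈ b i → (ε, w) ∈ b j → v ≠ w)
    (i₀ : ι)
    (T' : Set PNode)
    (hT' : T' = T ∪ {y | ∃ x ∈ T, ∃ i, i ≠ i₀ ∧ y = nstar x (b i)}) :
    (IsStreamlined T' ∧ UnifHomog T' ∧
      (∀ α, α ≤ κ.ord → (level T' α).Nonempty) ∧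
      (∀ α, κ.ord < α → level T' α = ∅) ∧
      {t ∈ T' | ∃ α, α < κ.ord ∧ ndom t = Set.Iio α} = T) ∧
    (IsBranch T' κ.ord {y | ∃ γ, γ < κ.ord ∧ y = nrestrict (b i₀) γ} ∧
      ⋃₀ {y : PNode | ∃ γ, γ < κ.ord ∧ y = nrestrict (b i₀) γ} ∉ T') ∧
    ({α ∈ VSet T' | α ≤ κ.ord} = (VSet T ∩ Set.Iic κ.ord) ∪ {κ.ord}) :=
  statement8_general κ hκunc T hnodes hstream hlevne hhom hι b hb hbT hbdist i₀ T' hT'
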